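/- arXiv:1606.06684 — 4 statements merged into one kernel-verified Lean document; each statement's English description precedes it below -/
import Mathlib

section
/- Let N_j ≥ 2, B_j ⊆ {0,...,N_j−1} nonempty, and c = sup_j (max B_j)/N_j. Let E = { ∑_{j≥1} b_j/(N_1⋯N_j) : b_j ∈ B_j }, and for k ≥ 1 set n_k = N_1⋯N_k. Then every element of n_k·E (reduced mod 1) lies in [0, 2c]. -/
/-!
Multiplying the Cantor series `x = ∑ b_j / (N_0 ⋯ N_j)` by `N_0 ⋯ N_{k-1}` turns its first `k` terms
into integers and leaves the Cantor series of the shifted sequences `N_{·+k}`, `b_{·+k}`. Since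
`b_j ≤ c N_j` and every `N_i ≥ 2`, the `j`-th term of any such series is at most `c / 2^j`, so the
series lies in `[0, 2c]`; hence so does its fractional part.
-/

open Finset

noncomputable def cantorSeries (N b : ℕ → ℝ) : ℝ :=
  ∑' j, b j / ∏ i ∈ range (j + 1), N i

section CantorSeries

variable {N b : ℕ → ℝ} {c : ℝ}

lemma two_pow_le_prod_range (hN : ∀ i, 2 ≤ N i) (m : ℕ) : (2 : ℝ) ^ m ≤ ∏ i ∈ range m, N i := by
  calc (2 : ℝ) ^ m = ∏ _i ∈ range m, (2 : ℝ) := by simp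
    _ ≤ ∏ i ∈ range m, N i := prod_le_prod (fun _ _ => zero_le_two) (fun i _ => hN i)

lemma cantorSeries_term_nonneg (hN : ∀ i, 0 ≤ N i) (hb : ∀ j, 0 ≤ b j) (j : ℕ) :
    0 ≤ b j / ∏ i ∈ range (j + 1), N i :=
  div_nonneg (hb j) (prod_nonneg fun i _ => hN i)

lemma cantorSeries_term_le (hN : ∀ i, 2 ≤ N i) (hb : ∀ j, 0 ≤ b j) (hbc : ∀ j, b j ≤ c * N j)
    (j : ℕ) : b j / ∏ i ∈ range (j + 1), N i ≤ c * (1 / 2) ^ j := by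
  have hNj : 0 < N j := zero_lt_two.trans_le (hN j)
  have hratio : b j / N j ≤ c := (div_le_iff₀ hNj).2 (hbc j)
  have hc : 0 ≤ c := (div_nonneg (hb j) hNj.le).trans hratio
  calc b j / ∏ i ∈ range (j + 1), N i = b j / N j / ∏ i ∈ range j, N i := by
        rw [prod_range_succ, div_div, mul_comm]
    _ ≤ c / 2 ^ j := div_le_div₀ hc hratio (by positivity) (two_pow_le_prod_range hN j)
    _ = c * (1 / 2) ^ j := by rw [one_div_pow, mul_one_div]

lemma summable_cantorSeries (hN : ∀ i, 2 ≤ N i) (hb : ∀ j, 0 ≤ b j) (hbc : ∀ j, b j ≤ c * N j) :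
    Summable fun j => b j / ∏ i ∈ range (j + 1), N i :=
  .of_nonneg_of_le (cantorSeries_term_nonneg (fun i => zero_le_two.trans (hN i)) hb)
    (cantorSeries_term_le hN hb hbc) (summable_geometric_two.mul_left c)

lemma cantorSeries_nonneg (hN : ∀ i, 0 ≤ N i) (hb : ∀ j, 0 ≤ b j) : 0 ≤ cantorSeries N b :=
  tsum_nonneg (cantorSeries_term_nonneg hN hb)

lemma cantorSeries_le_two_mul (hN : ∀ i, 2 ≤ N i) (hb : ∀ j, 0 ≤ b j)
    (hbc : ∀ j, b j ≤ c * N j) : cantorSeries N b ≤ 2 * c :=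
  calc cantorSeries N b ≤ ∑' j : ℕ, c * (1 / 2) ^ j :=
        (summable_cantorSeries hN hb hbc).tsum_le_tsum (cantorSeries_term_le hN hb hbc)
          (summable_geometric_two.mul_left c)
    _ = 2 * c := by rw [tsum_mul_left, tsum_geometric_two, mul_comm]

lemma prod_range_mul_cantorSeries (hN : ∀ i, N i ≠ 0)
    (hsum : Summable fun j => b j / ∏ i ∈ range (j + 1), N i) (k : ℕ) :
    (∏ i ∈ range k, N i) * cantorSeries N b =
      ∑ j ∈ range k, b j * ∏ i ∈ Ico (j + 1) k, N i +
        cantorSeries (fun i => N (i + k)) (fun j => b (j + k)) := by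
  have hP : ∀ m, ∏ i ∈ range m, N i ≠ 0 := fun m => prod_ne_zero_iff.2 fun i _ => hN i
  have hhead : ∀ j ∈ range k, (∏ i ∈ range k, N i) * (b j / ∏ i ∈ range (j + 1), N i) =
      b j * ∏ i ∈ Ico (j + 1) k, N i := fun j hj => by
    rw [← prod_range_mul_prod_Ico N (mem_range.1 hj)]
    field_simp [hP (j + 1)]
  have htail : ∀ j, (∏ i ∈ range k, N i) * (b (j + k) / ∏ i ∈ range (j + k + 1), N i) =
      b (j + k) / ∏ i ∈ range (j + 1), N (i + k) := fun j => by
    rw [show j + k + 1 = k + (j + 1) by ring, prod_range_add, mul_div_assoc',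
      mul_div_mul_left _ _ (hP k)]
    simp only [add_comm k]
  rw [cantorSeries, ← hsum.sum_add_tsum_nat_add k, mul_add, mul_sum, sum_congr rfl hhead,
    ← tsum_mul_left, tsum_congr htail, cantorSeries]

end CantorSeries

lemma Int.fract_le_self {R : Type*} [Ring R] [LinearOrder R] [IsStrictOrderedRing R] [FloorRing R]
    {a : R} (ha : 0 ≤ a) : Int.fract a ≤ a :=
  sub_le_self a (by exact_mod_cast Int.floor_nonneg.2 ha)

lemma natCast_le_iSup_max'_div_mul (N : ℕ → ℕ) (B : ℕ → Finset ℕ) (hBne : ∀ j, (B j).Nonempty)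
    (hB : ∀ j, B j ⊆ range (N j)) {j b : ℕ} (hb : b ∈ B j) :
    (b : ℝ) ≤ (⨆ j : ℕ, ((B j).max' (hBne j) : ℝ) / (N j : ℝ)) * N j := by
  have hmax : ∀ j, (B j).max' (hBne j) < N j := fun j => mem_range.1 (hB j ((B j).max'_mem _))
  have hNj : (0 : ℝ) < N j := by exact_mod_cast (Nat.zero_le _).trans_lt (hmax j)
  have hbdd : BddAbove (Set.range fun j => ((B j).max' (hBne j) : ℝ) / (N j : ℝ)) :=
    ⟨1, Set.forall_mem_range.2 fun j => div_le_one_of_le₀ (by exact_mod_cast (hmax j).le)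
      (Nat.cast_nonneg _)⟩
  calc (b : ℝ) ≤ (B j).max' (hBne j) := by exact_mod_cast (B j).le_max' b hb
    _ ≤ _ := (div_le_iff₀ hNj).1 (le_ciSup hbdd j)

open Finset in
theorem moran_scaled_mod_one_subset
    (N : ℕ → ℕ) (B : ℕ → Finset ℕ)
    (hN : ∀ j, 2 ≤ N j)
    (hBne : ∀ j, (B j).Nonempty)
    (hB : ∀ j, B j ⊆ Finset.range (N j))
    (c : ℝ)
    (hc : c = ⨆ j : ℕ, ((B j).max' (hBne j) : ℝ) / (N j : ℝ)) :
    ∀ x ∈ {x : ℝ | ∃ b : ℕ → ℕ, (∀ j, b j ∈ B j) ∧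
      x = ∑' j : ℕ, (b j : ℝ) / ∏ i ∈ Finset.range (j + 1), (N i : ℝ)},
    ∀ k : ℕ, 1 ≤ k →
      Int.fract ((∏ i ∈ Finset.range k, (N i : ℝ)) * x) ∈ Set.Icc 0 (2 * c) := by
  rintro x ⟨b, hb, rfl⟩ k -
  have hNR : ∀ i, (2 : ℝ) ≤ N i := fun i => by exact_mod_cast hN i
  have hb0 : ∀ j, (0 : ℝ) ≤ b j := fun j => Nat.cast_nonneg _
  have hbc : ∀ j, (b j : ℝ) ≤ c * N j :=
    fun j => hc ▸ natCast_le_iSup_max'_div_mul N B hBne hB (hb j)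
  obtain ⟨n, hn⟩ : ∃ n : ℕ, ∑ j ∈ range k, (b j : ℝ) * ∏ i ∈ Ico (j + 1) k, (N i : ℝ) = n :=
    ⟨∑ j ∈ range k, b j * ∏ i ∈ Ico (j + 1) k, N i, by push_cast; rfl⟩
  change Int.fract ((∏ i ∈ range k, (N i : ℝ)) * cantorSeries (fun i => N i) (fun j => b j)) ∈ _
  rw [prod_range_mul_cantorSeries (fun i => (zero_lt_two.trans_le (hNR i)).ne')
    (summable_cantorSeries hNR hb0 hbc), hn, Int.fract_natCast_add]
  refine ⟨Int.fract_nonneg _, ?_⟩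
  calc Int.fract _ ≤ _ := Int.fract_le_self (cantorSeries_nonneg (fun _ => Nat.cast_nonneg _)
        fun _ => hb0 _)
    _ ≤ 2 * c := cantorSeries_le_two_mul (fun _ => hNR _) (fun _ => hb0 _) fun _ => hbc _
end

section
/- Let N_j ≥ 3, B_j = {0,...,K_j−1} with 0 < K_j < N_j, and suppose c = sup_j K_j/N_j < √6/π. Let μ be the infinite convolution μ = ν_1 ∗ ν_2 ∗ ⋯ where ν_n = (1/K_n) ∑_{j=0}^{K_n−1} δ_{j/(N_1⋯N_n)}. Then inf_n |μ̂(N_1⋯N_n)| > 0; in particular limsup_{n→∞} |μ̂(n)| > 0, so μ̂ does not tend to zero at infinity. -/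
/-!
For `m ≤ n` the ratio `N₀⋯Nₙ / N₀⋯N_m` is an integer, so the first `n + 1` factors of
`μ̂(N₀⋯Nₙ)` equal `1`. The factor of index `n + 1 + k` is an average of `e^{-2πijt}`, `j < K`,
with `0 ≤ Kt ≤ c 3^{-k}`; centring the frequencies and using `cos θ ≥ 1 - θ²/2` bounds its modulus
below by `1 - π²(Kt)²/6 ≥ 1 - q 9^{-k}`, where `q = π²c²/6 < 1`. Keeping the first of these
factors aside and applying `∏ (1 - aₖ) ≥ 1 - ∑ aₖ` to the others bounds every partial product,
hence the infinite one, below by `(1 - q)(1 - q / 8) > 0`, uniformly in `n`.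
-/

open MeasureTheory Real Finset Filter Topology

/-- `ν̂_{n+1}(ξ) = uniformDigitsFourier (K n) (ξ / (N 0 ⋯ N n))`, the sequences being indexed
from `0`. -/
noncomputable def uniformDigitsFourier (K : ℕ) (t : ℝ) : ℂ :=
  (K : ℂ)⁻¹ * ∑ j ∈ range K, Complex.exp (-(2 * π * t * j) * Complex.I)

theorem sum_range_sub_two_mul_sq (x : ℝ) (K : ℕ) :
    ∑ j ∈ range K, (x - 2 * j) ^ 2 =
      K * x ^ 2 - 2 * x * K * (K - 1) + 2 * K * (K - 1) * (2 * K - 1) / 3 := by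
  induction K with
  | zero => simp
  | succ K ih => rw [sum_range_succ, ih]; push_cast; ring

theorem one_sub_le_norm_uniformDigitsFourier {K : ℕ} (hK : 0 < K) (t : ℝ) :
    1 - π ^ 2 * (K * t) ^ 2 / 6 ≤ ‖uniformDigitsFourier K t‖ := by
  -- Rotating by `exp (iπ(K-1)t)` centres the frequencies at `0`; then use `1 - θ²/2 ≤ cos θ`.
  set θ : ℕ → ℝ := fun j => π * t * (K - 1 - 2 * j)
  have hK' : (0 : ℝ) < K := Nat.cast_pos.2 hK
  have hrot : Complex.exp (↑(π * t * (K - 1)) * Complex.I) * uniformDigitsFourier K t =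
      (K : ℂ)⁻¹ * ∑ j ∈ range K, Complex.exp (θ j * Complex.I) := by
    rw [uniformDigitsFourier, mul_left_comm, mul_sum]
    congr 1
    refine sum_congr rfl fun j _ => ?_
    rw [← Complex.exp_add]
    congr 1
    simp only [θ]
    push_cast
    ring
  have hre : (Complex.exp (↑(π * t * (K - 1)) * Complex.I) * uniformDigitsFourier K t).re =
      (K : ℝ)⁻¹ * ∑ j ∈ range K, cos (θ j) := by
    rw [hrot, ← Complex.ofReal_natCast, ← Complex.ofReal_inv, Complex.re_ofReal_mul,
      Complex.re_sum]
    simp only [Complex.exp_ofReal_mul_I_re]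
  have hcos : K * (1 - π ^ 2 * (K * t) ^ 2 / 6) ≤ ∑ j ∈ range K, cos (θ j) := calc
    K * (1 - π ^ 2 * (K * t) ^ 2 / 6)
      ≤ K - (π * t) ^ 2 / 2 * ∑ j ∈ range K, ((K : ℝ) - 1 - 2 * j) ^ 2 := by
        rw [sum_range_sub_two_mul_sq]
        nlinarith [sq_nonneg (π * t)]
    _ = ∑ j ∈ range K, (1 - θ j ^ 2 / 2) := by
        simp only [θ, sum_sub_distrib, sum_const, card_range, nsmul_eq_mul, mul_one, mul_sum]
        congr 1
        refine sum_congr rfl fun j _ => ?_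
        ring
    _ ≤ ∑ j ∈ range K, cos (θ j) := sum_le_sum fun j _ => one_sub_sq_div_two_le_cos
  calc 1 - π ^ 2 * (K * t) ^ 2 / 6
      = (K : ℝ)⁻¹ * (K * (1 - π ^ 2 * (K * t) ^ 2 / 6)) := by field_simp
    _ ≤ (K : ℝ)⁻¹ * ∑ j ∈ range K, cos (θ j) := by gcongr
    _ = _ := hre.symm
    _ ≤ ‖Complex.exp (↑(π * t * (K - 1)) * Complex.I) * uniformDigitsFourier K t‖ :=
        Complex.re_le_norm _
    _ = ‖uniformDigitsFourier K t‖ := by rw [norm_mul, Complex.norm_exp_ofReal_mul_I, one_mul]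

theorem uniformDigitsFourier_natCast {K : ℕ} (hK : K ≠ 0) (m : ℕ) :
    uniformDigitsFourier K m = 1 := by
  have h : ∀ j ∈ range K, Complex.exp (-(2 * π * (m : ℝ) * j) * Complex.I) = 1 := fun j _ => by
    rw [show -(2 * π * ((m : ℝ) : ℂ) * j) * Complex.I = ((-(m * j) : ℤ) : ℂ) * (2 * π * Complex.I)
      by push_cast; ring]
    exact Complex.exp_int_mul_two_pi_mul_I _
  rw [uniformDigitsFourier, sum_congr rfl h]
  simp [hK]

theorem uniformDigitsFourier_eq_mul_sum (K : ℕ) (ξ P : ℝ) :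
    uniformDigitsFourier K (ξ / P) = (K : ℂ)⁻¹ * ∑ j ∈ range K,
      Complex.exp (-(2 * π * ξ * ((j : ℝ) / P)) * Complex.I) := by
  simp only [uniformDigitsFourier]
  congr 1
  refine sum_congr rfl fun j _ => ?_
  push_cast
  ring_nf

theorem one_sub_sum_le_prod_one_sub {ι : Type*} (s : Finset ι) {a : ι → ℝ}
    (h0 : ∀ i ∈ s, 0 ≤ a i) (h1 : ∀ i ∈ s, a i ≤ 1) :
    1 - ∑ i ∈ s, a i ≤ ∏ i ∈ s, (1 - a i) := by
  induction s using Finset.cons_induction with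
  | empty => simp
  | cons i s hi ih =>
    simp only [mem_cons, forall_eq_or_imp] at h0 h1
    rw [sum_cons, prod_cons]
    have := ih h0.2 h1.2
    have := sum_nonneg h0.2
    nlinarith [h0.1, h1.1]

theorem mul_one_sub_tsum_le_prod_one_sub {a : ℕ → ℝ} (h0 : ∀ k, 0 ≤ a k) (h1 : ∀ k, a k ≤ 1)
    (ha : Summable a) (s : Finset ℕ) :
    (1 - a 0) * (1 - ∑' k, a (k + 1)) ≤ ∏ k ∈ s, (1 - a k) := by
  obtain ⟨R, hsR⟩ : ∃ R, s ⊆ range R := ⟨_, s.subset_range_sup_succ⟩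
  have htail : 1 - ∑' k, a (k + 1) ≤ ∏ k ∈ range R, (1 - a (k + 1)) := calc
    1 - ∑' k, a (k + 1) ≤ 1 - ∑ k ∈ range R, a (k + 1) := by
      gcongr
      exact ((summable_nat_add_iff 1).2 ha).sum_le_tsum _ fun k _ => h0 _
    _ ≤ _ := one_sub_sum_le_prod_one_sub _ (fun k _ => h0 _) fun k _ => h1 _
  calc (1 - a 0) * (1 - ∑' k, a (k + 1))
      ≤ (1 - a 0) * ∏ k ∈ range R, (1 - a (k + 1)) := by gcongr; linarith [h1 0]
    _ = ∏ k ∈ range (R + 1), (1 - a k) := by rw [prod_range_succ', mul_comm]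
    _ ≤ ∏ k ∈ s, (1 - a k) :=
        prod_le_prod_of_subset_of_le_one (hsR.trans (range_subset_range.2 R.le_succ))
          (fun k _ => by linarith [h1 k]) fun k _ _ => by linarith [h0 k]

theorem one_sub_mul_one_sub_div_eight_le_prod {q : ℝ} (hq0 : 0 ≤ q) (hq1 : q ≤ 1)
    (s : Finset ℕ) : (1 - q) * (1 - q / 8) ≤ ∏ k ∈ s, (1 - q * (1 / 9) ^ k) := by
  have hgeom : Summable fun k : ℕ => q * (1 / 9 : ℝ) ^ k :=
    (summable_geometric_of_lt_one (by norm_num) (by norm_num)).mul_left q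
  have htail : ∑' k : ℕ, q * (1 / 9 : ℝ) ^ (k + 1) = q / 8 := by
    simp only [pow_succ, ← mul_assoc]
    rw [tsum_mul_right, tsum_mul_left, tsum_geometric_of_lt_one (by norm_num) (by norm_num)]
    ring
  simpa only [pow_zero, mul_one, htail] using
    mul_one_sub_tsum_le_prod_one_sub (fun k => by positivity)
      (fun k => mul_le_one₀ hq1 (by positivity) (pow_le_one₀ (by norm_num) (by norm_num))) hgeom s

theorem le_norm_tprod_of_forall_le_norm_prod {ι R : Type*} [NormedCommRing R] [NormOneClass R]
    {f : ι → R} {δ : ℝ} (hδ : δ ≤ 1) (h : ∀ s : Finset ι, δ ≤ ‖∏ i ∈ s, f i‖) :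
    δ ≤ ‖∏' i, f i‖ := by
  by_cases hf : Multipliable f
  · exact ge_of_tendsto ((continuous_norm.tendsto _).comp hf.hasProd) (.of_forall h)
  · rwa [tprod_eq_one_of_not_multipliable hf, norm_one]

theorem prod_range_div_prod_range_eq_prod_Ico {G₀ : Type*} [CommGroupWithZero G₀] {f : ℕ → G₀}
    (hf : ∀ i, f i ≠ 0) {m n : ℕ} (h : m ≤ n) :
    (∏ i ∈ range n, f i) / ∏ i ∈ range m, f i = ∏ i ∈ Ico m n, f i := by
  rw [← prod_range_mul_prod_Ico f h, mul_div_cancel_left₀ _ (prod_ne_zero_iff.2 fun i _ => hf i)]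

section MoranFactors

variable {N K : ℕ → ℕ}

theorem uniformDigitsFourier_prod_range_div_eq_one (hN : ∀ i, N i ≠ 0) (hK : ∀ i, K i ≠ 0)
    {m n : ℕ} (h : m ≤ n) :
    uniformDigitsFourier (K m)
      ((∏ i ∈ range (n + 1), (N i : ℝ)) / ∏ i ∈ range (m + 1), (N i : ℝ)) = 1 := by
  rw [prod_range_div_prod_range_eq_prod_Ico (fun i => Nat.cast_ne_zero.2 (hN i)) (by omega),
    ← Nat.cast_prod, uniformDigitsFourier_natCast (hK m)]

theorem one_sub_le_norm_uniformDigitsFourier_prod_range_div (hN : ∀ i, 3 ≤ N i)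
    (hK : ∀ i, 0 < K i) {c : ℝ} (hc : ∀ i, (K i : ℝ) / N i ≤ c) (n k : ℕ) :
    1 - π ^ 2 * c ^ 2 / 6 * (1 / 9) ^ k ≤ ‖uniformDigitsFourier (K (n + 1 + k))
      ((∏ i ∈ range (n + 1), (N i : ℝ)) / ∏ i ∈ range (n + 1 + k + 1), (N i : ℝ))‖ := by
  set m := n + 1 + k
  set D := ∏ i ∈ Ico (n + 1) m, N i
  have hNpos : ∀ i, (0 : ℝ) < N i := fun i => Nat.cast_pos.2 (three_pos.trans_le (hN i))
  have hD : (3 : ℝ) ^ k ≤ D := by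
    have hcard : #(Ico (n + 1) m) = k := by rw [Nat.card_Ico]; omega
    exact_mod_cast hcard ▸ pow_card_le_prod _ _ 3 fun i _ => hN i
  have hratio : (∏ i ∈ range (n + 1), (N i : ℝ)) / ∏ i ∈ range (m + 1), (N i : ℝ) =
      (D * N m : ℝ)⁻¹ := by
    rw [← inv_div, prod_range_div_prod_range_eq_prod_Ico (fun i => (hNpos i).ne') (by omega),
      prod_Ico_succ_top (by omega), Nat.cast_prod]
  have hKt : (K m : ℝ) * (D * N m : ℝ)⁻¹ ≤ c * (1 / 3) ^ k := calc
    (K m : ℝ) * (D * N m : ℝ)⁻¹ = (K m / N m) / D := by field_simp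
    _ ≤ c / 3 ^ k := div_le_div₀ ((div_nonneg (by positivity) (hNpos m).le).trans (hc m)) (hc m)
        (by positivity) hD
    _ = c * (1 / 3) ^ k := by rw [one_div_pow, mul_one_div]
  have hsq : ((K m : ℝ) * (D * N m : ℝ)⁻¹) ^ 2 ≤ c ^ 2 * (1 / 9) ^ k := calc
    _ ≤ (c * (1 / 3) ^ k) ^ 2 := pow_le_pow_left₀ (by positivity) hKt 2
    _ = c ^ 2 * (1 / 9) ^ k := by rw [mul_pow, ← pow_mul, mul_comm k, pow_mul]; norm_num
  rw [hratio]
  refine le_trans ?_ (one_sub_le_norm_uniformDigitsFourier (hK m) _)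
  linarith [mul_le_mul_of_nonneg_left hsq (sq_nonneg π)]

theorem le_norm_tprod_uniformDigitsFourier_prod_range_div (hN : ∀ i, 3 ≤ N i) (hK : ∀ i, 0 < K i)
    {c : ℝ} (hc : ∀ i, (K i : ℝ) / N i ≤ c) (hq : π ^ 2 * c ^ 2 / 6 ≤ 1) (n : ℕ) :
    (1 - π ^ 2 * c ^ 2 / 6) * (1 - π ^ 2 * c ^ 2 / 6 / 8) ≤ ‖∏' m, uniformDigitsFourier (K m)
      ((∏ i ∈ range (n + 1), (N i : ℝ)) / ∏ i ∈ range (m + 1), (N i : ℝ))‖ := by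
  set q := π ^ 2 * c ^ 2 / 6
  have hq0 : 0 ≤ q := by positivity
  set g : ℕ → ℂ := fun m => uniformDigitsFourier (K m)
    ((∏ i ∈ range (n + 1), (N i : ℝ)) / ∏ i ∈ range (m + 1), (N i : ℝ))
  have hsupp : Function.mulSupport g ⊆ Set.range (n + 1 + ·) := fun m hm => by
    by_cases hmn : m ≤ n
    · exact absurd (uniformDigitsFourier_prod_range_div_eq_one
      (fun i => (three_pos.trans_le (hN i)).ne') (fun i => (hK i).ne') hmn) hm
    · exact ⟨m - (n + 1), Nat.add_sub_cancel' (by omega)⟩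
  rw [← (add_right_injective (n + 1)).tprod_eq hsupp]
  refine le_norm_tprod_of_forall_le_norm_prod (by nlinarith) fun s => ?_
  rw [norm_prod]
  refine (one_sub_mul_one_sub_div_eight_le_prod hq0 hq s).trans (prod_le_prod (fun k _ => ?_)
    fun k _ => one_sub_le_norm_uniformDigitsFourier_prod_range_div hN hK hc n k)
  have : q * (1 / 9 : ℝ) ^ k ≤ q :=
    mul_le_of_le_one_right hq0 (pow_le_one₀ (by norm_num) (by norm_num))
  linarith

end MoranFactors

theorem norm_integral_exp_ofReal_mul_I_le_one {α : Type*} [MeasurableSpace α] (μ : Measure α)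
    [IsProbabilityMeasure μ] (f : α → ℝ) : ‖∫ x, Complex.exp (f x * Complex.I) ∂μ‖ ≤ 1 := by
  simpa using norm_integral_le_of_norm_le_const (μ := μ) (C := 1)
    (.of_forall fun x => (Complex.norm_exp_ofReal_mul_I (f x)).le)

theorem tendsto_prod_range_atTop {N : ℕ → ℕ} (hN : ∀ i, 2 ≤ N i) :
    Tendsto (fun n => ∏ i ∈ range n, N i) atTop atTop :=
  tendsto_atTop_mono (fun n => Nat.lt_two_pow_self.le.trans
    (by simpa using pow_card_le_prod (range n) N 2 fun i _ => hN i)) tendsto_id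

theorem limsup_pos_and_not_tendsto_zero_of_le_comp {u : ℕ → ℝ} {φ : ℕ → ℕ} {δ : ℝ}
    (hδ : 0 < δ) (hu : IsBoundedUnder (· ≤ ·) atTop u)
    (hφ : Tendsto φ atTop atTop) (h : ∀ n, δ ≤ u (φ n)) :
    0 < limsup u atTop ∧ ¬ Tendsto u atTop (𝓝 0) := by
  have hfreq : ∃ᶠ m in atTop, δ ≤ u m := hφ.frequently (.of_forall h)
  refine ⟨hδ.trans_le (le_limsup_of_frequently_le hfreq hu), fun hu0 => ?_⟩
  obtain ⟨m, hδm, hmδ⟩ := (hfreq.and_eventually (hu0.eventually_lt_const hδ)).exists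
  exact (hδm.trans_lt hmδ).false

open MeasureTheory Real Finset in
theorem moran_measure_nonvanishing_fourier
    (N K : ℕ → ℕ)
    (hN : ∀ j, 3 ≤ N j)
    (hK : ∀ j, 0 < K j)
    (hKN : ∀ j, K j < N j)
    (hc : (⨆ j : ℕ, (K j : ℝ) / (N j : ℝ)) < Real.sqrt 6 / π)
    (μ : Measure ℝ) [IsProbabilityMeasure μ]
    -- μ = ν₁ ∗ ν₂ ∗ ⋯ , encoded via its Fourier transform being the
    -- infinite product of the Fourier transforms of the νₙ's
    (hμ : ∀ ξ : ℝ,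
      (∫ x, Complex.exp (-(2 * π * ξ * x) * Complex.I) ∂μ) =
        ∏' n : ℕ, ((K n : ℂ))⁻¹ * ∑ j ∈ Finset.range (K n),
          Complex.exp (-(2 * π * ξ * ((j : ℝ) /
            ∏ i ∈ Finset.range (n + 1), (N i : ℝ))) * Complex.I)) :
    (0 < ⨅ n : ℕ, ‖∫ x,
        Complex.exp (-(2 * π * (∏ i ∈ Finset.range (n + 1), (N i : ℝ)) * x)
          * Complex.I) ∂μ‖) ∧
    0 < Filter.limsup (fun m : ℕ =>
        ‖∫ x, Complex.exp (-(2 * π * (m : ℝ) * x) * Complex.I) ∂μ‖)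
      Filter.atTop ∧
    ¬ Filter.Tendsto (fun m : ℕ =>
        ‖∫ x, Complex.exp (-(2 * π * (m : ℝ) * x) * Complex.I) ∂μ‖)
      Filter.atTop (nhds 0) := by
  set u : ℝ → ℝ := fun ξ => ‖∫ x, Complex.exp (-(2 * π * ξ * x) * Complex.I) ∂μ‖
  set c := ⨆ j : ℕ, (K j : ℝ) / (N j : ℝ)
  set q := π ^ 2 * c ^ 2 / 6
  have hratio : ∀ j, (K j : ℝ) / N j ≤ 1 := fun j =>
    div_le_one_of_le₀ (by exact_mod_cast (hKN j).le) (Nat.cast_nonneg _)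
  have hcj : ∀ j, (K j : ℝ) / N j ≤ c := le_ciSup ⟨1, Set.forall_mem_range.2 hratio⟩
  have hq : q < 1 := by
    have hc0 : 0 ≤ c := (div_nonneg (Nat.cast_nonneg _) (Nat.cast_nonneg _)).trans (hcj 0)
    have hcπ : (c * π) ^ 2 < √6 ^ 2 :=
      pow_lt_pow_left₀ ((lt_div_iff₀ pi_pos).1 hc) (by positivity) two_ne_zero
    rw [sq_sqrt (by norm_num)] at hcπ
    linarith [show q = (c * π) ^ 2 / 6 by ring]
  have hδ : 0 < (1 - q) * (1 - q / 8) := by apply mul_pos <;> linarith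
  have hlower : ∀ n, (1 - q) * (1 - q / 8) ≤ u (∏ i ∈ range (n + 1), (N i : ℝ)) := fun n => by
    simp only [u, hμ, ← uniformDigitsFourier_eq_mul_sum]
    exact le_norm_tprod_uniformDigitsFourier_prod_range_div hN hK hcj hq.le n
  have hbdd : ∀ m : ℕ, u m ≤ 1 := fun m => by
    simpa [u] using norm_integral_exp_ofReal_mul_I_le_one μ fun x => -(2 * π * m * x)
  have hP : Tendsto (fun n => ∏ i ∈ range (n + 1), N i) atTop atTop :=
    (tendsto_prod_range_atTop fun i => by linarith [hN i]).comp (tendsto_add_atTop_nat 1)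
  exact ⟨hδ.trans_le (le_ciInf hlower), limsup_pos_and_not_tendsto_zero_of_le_comp hδ
    ⟨1, eventually_map.2 (.of_forall hbdd)⟩ hP fun n => by simpa [u] using hlower n⟩
end

section
/- Let E ⊆ ℝ/ℤ and suppose there exists a strictly increasing sequence of positive integers n_k such that the closure of ⋃_k n_k E is not all of ℝ/ℤ. If μ is a finite Borel measure with support contained in E and μ ≠ 0, then μ̂(m) does not tend to 0 as |m| → ∞ (E is a set of multiplicity only for non-Rajchman measures; equivalently, every Rajchman measure vanishes on E). -/
/-!
If `μ` were Rajchman, then `∫ F (n_k x) dμ → μ(𝕋) ∫ F` for every continuous `F`: for a character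
`F = e_m` with `m ≠ 0` the left side is `μ̂(-m n_k) → 0`, and the convergence passes to uniform
limits because the functionals `F ↦ ∫ F (n_k x) dμ` are uniformly Lipschitz. A nonnegative `F`
vanishing on the closure of `⋃ n_k E` but not everywhere makes the left side `0` for every `k`
and the right side positive.
-/

open MeasureTheory Filter Topology AddCircle Set

section CompactSpace

variable {X Y E : Type*} [TopologicalSpace X] [CompactSpace X] [MeasurableSpace X]
  [OpensMeasurableSpace X] [NormedAddCommGroup E]

theorem Continuous.integrable_of_compactSpace {f : X → E} (hf : Continuous f) (μ : Measure X)
    [IsFiniteMeasure μ] : Integrable f μ :=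
  hf.integrable_of_hasCompactSupport (.of_compactSpace f)

variable [NormedSpace ℝ E] [TopologicalSpace Y] [CompactSpace Y]

theorem lipschitzWith_integral_comp (μ : Measure X) [IsFiniteMeasure μ] {φ : X → Y}
    (hφ : Continuous φ) :
    LipschitzWith (μ.real univ).toNNReal (fun G : C(Y, E) => ∫ x, G (φ x) ∂μ) := by
  have hint (H : C(Y, E)) : Integrable (fun x => H (φ x)) μ :=
    (H.continuous.comp hφ).integrable_of_compactSpace μ
  refine LipschitzWith.of_dist_le_mul fun F G => ?_
  rw [Real.coe_toNNReal _ measureReal_nonneg, dist_eq_norm, ← integral_sub (hint F) (hint G),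
    mul_comm]
  refine norm_integral_le_of_norm_le_const (ae_of_all _ fun x => ?_)
  rw [← dist_eq_norm]
  exact ContinuousMap.dist_apply_le_dist (φ x)

end CompactSpace

namespace AddCircle

variable {T : ℝ}

def IsRajchman (μ : Measure (AddCircle T)) : Prop :=
  Tendsto (fun m : ℤ => ∫ x, fourier (-m) x ∂μ) cofinite (𝓝 0)

theorem fourier_zsmul_apply (m j : ℤ) (x : AddCircle T) :
    fourier m (j • x) = fourier (m * j) x := by
  rw [fourier_apply, fourier_apply, smul_smul]

variable [Fact (0 < T)]

theorem integral_fourier_haarAddCircle_of_ne_zero {m : ℤ} (hm : m ≠ 0) :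
    ∫ x, fourier m x ∂(haarAddCircle : Measure (AddCircle T)) = 0 :=
  integral_eq_zero_of_add_right_eq_neg (fourier_add_half_inv_index hm Fact.out)

variable {ι : Type*} {l : Filter ι} {n : ι → ℤ} {μ : Measure (AddCircle T)}

theorem IsRajchman.tendsto_integral_fourier_comp_zsmul (hμ : IsRajchman μ)
    (hn : Tendsto n l cofinite) (m : ℤ) :
    Tendsto (fun k => ∫ x, fourier m (n k • x) ∂μ) l
      (𝓝 (μ.real univ * ∫ x, fourier m x ∂(haarAddCircle : Measure (AddCircle T)))) := by
  rcases eq_or_ne m 0 with rfl | hm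
  · simpa using tendsto_const_nhds
  have hmn : Tendsto (fun k => -(m * n k)) l cofinite :=
    (neg_injective.comp (mul_right_injective₀ hm)).tendsto_cofinite.comp hn
  rw [integral_fourier_haarAddCircle_of_ne_zero hm, mul_zero]
  refine (hμ.comp hmn).congr fun k => ?_
  simp only [Function.comp_apply, neg_neg, fourier_zsmul_apply]

theorem IsRajchman.tendsto_integral_comp_zsmul [IsFiniteMeasure μ] (hμ : IsRajchman μ)
    (hn : Tendsto n l cofinite) (F : C(AddCircle T, ℂ)) :
    Tendsto (fun k => ∫ x, F (n k • x) ∂μ) l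
      (𝓝 (μ.real univ * ∫ x, F x ∂haarAddCircle)) := by
  have hint : ∀ (G : C(AddCircle T, ℂ)) (j : ℤ), Integrable (fun x => G (j • x)) μ :=
    fun G j => (G.continuous.comp (continuous_const_smul j)).integrable_of_compactSpace μ
  let S : Submodule ℂ C(AddCircle T, ℂ) :=
    { carrier := {G | Tendsto (fun k => ∫ x, G (n k • x) ∂μ) l
        (𝓝 (μ.real univ * ∫ x, G x ∂haarAddCircle))}
      zero_mem' := by simpa using tendsto_const_nhds
      add_mem' := fun {F G} hF hG => by
        simp only [mem_ofPred_eq, ContinuousMap.add_apply]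
        simp_rw [integral_add (hint F _) (hint G _)]
        rw [integral_add (F.continuous.integrable_of_compactSpace _)
          (G.continuous.integrable_of_compactSpace _), mul_add]
        exact hF.add hG
      smul_mem' := fun c G hG => by
        simp only [mem_ofPred_eq, ContinuousMap.smul_apply, smul_eq_mul, integral_const_mul]
        rw [mul_left_comm]
        exact hG.const_mul c }
  have hequi : Equicontinuous fun k (G : C(AddCircle T, ℂ)) => ∫ x, G (n k • x) ∂μ :=
    (LipschitzWith.uniformEquicontinuous _ _ fun k =>
      lipschitzWith_integral_comp μ (continuous_const_smul (n k))).equicontinuous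
  have hclosed : IsClosed (S : Set C(AddCircle T, ℂ)) :=
    hequi.isClosed_setOfPred_tendsto
      (continuous_const.mul (lipschitzWith_integral_comp _ continuous_id).continuous)
  have hspan : Submodule.span ℂ (range fourier) ≤ S :=
    Submodule.span_le.2 (range_subset_iff.2 (hμ.tendsto_integral_fourier_comp_zsmul hn))
  have htop := Submodule.topologicalClosure_minimal _ hspan hclosed
  rw [span_fourier_closure_eq_top] at htop
  exact htop Submodule.mem_top

end AddCircle

open MeasureTheory in
theorem rajchman_vanishes_on_H_sets_general
    (E : Set (AddCircle (1 : ℝ)))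
    (n : ℕ → ℕ) (hmono : StrictMono n)
    (hcl : closure (⋃ k : ℕ, (fun x : AddCircle (1 : ℝ) => (n k : ℤ) • x) '' E)
      ≠ Set.univ)
    (μ : Measure (AddCircle (1 : ℝ))) [IsFiniteMeasure μ]
    (hμ0 : μ ≠ 0) (hsupp : μ Eᶜ = 0) :
    ¬ Filter.Tendsto (fun m : ℤ =>
        ‖∫ x, fourier (-m) x ∂μ‖) Filter.cofinite (nhds 0) := by
  intro hμ
  have : Fact (0 < (1 : ℝ)) := ⟨one_pos⟩
  have : NeZero μ := ⟨hμ0⟩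
  obtain ⟨z, hz⟩ := (ne_univ_iff_exists_notMem _).mp hcl
  obtain ⟨f, hf_zero, hf_one, hf_mem⟩ := exists_continuous_zero_one_of_isClosed isClosed_closure
    isClosed_singleton (disjoint_singleton_right.2 hz)
  have hf_mean : 0 < ∫ x, f x ∂haarAddCircle :=
    f.continuous.integral_pos_of_hasCompactSupport_nonneg_nonzero (.of_compactSpace _)
      (fun x => (hf_mem x).1) (x := z) (by simp [hf_one rfl])
  have hn : Tendsto (fun k => (n k : ℤ)) atTop cofinite :=
    Nat.cofinite_eq_atTop ▸ (Nat.cast_injective.comp hmono.injective).tendsto_cofinite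
  have hR : IsRajchman μ := tendsto_zero_iff_norm_tendsto_zero.2 hμ
  have hlim :=
    hR.tendsto_integral_comp_zsmul hn (ContinuousMap.comp ⟨_, Complex.continuous_ofReal⟩ f)
  have hzero : ∀ k, ∫ x, (f ((n k : ℤ) • x) : ℂ) ∂μ = 0 := fun k =>
    integral_eq_zero_of_ae <| (ae_iff.2 hsupp).mono fun x hx => by
      simp only [hf_zero (subset_closure (mem_iUnion_of_mem k (mem_image_of_mem _ hx))),
        Pi.zero_apply, Complex.ofReal_zero]
  simp only [ContinuousMap.comp_apply, ContinuousMap.coe_mk, hzero, integral_complex_ofReal] at hlim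
  have hlim_eq := tendsto_nhds_unique tendsto_const_nhds hlim
  exact (mul_pos measureReal_univ_pos hf_mean).ne (by exact_mod_cast hlim_eq)

open MeasureTheory in
theorem rajchman_vanishes_on_H_sets
    (E : Set (AddCircle (1 : ℝ)))
    (n : ℕ → ℕ) (hpos : ∀ k, 0 < n k) (hmono : StrictMono n)
    (hcl : closure (⋃ k : ℕ, (fun x : AddCircle (1 : ℝ) => (n k : ℤ) • x) '' E)
      ≠ Set.univ)
    (μ : Measure (AddCircle (1 : ℝ))) [IsFiniteMeasure μ]
    (hμ0 : μ ≠ 0) (hsupp : μ Eᶜ = 0) :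
    ¬ Filter.Tendsto (fun m : ℤ =>
        ‖∫ x, fourier (-m) x ∂μ‖) Filter.cofinite (nhds 0) :=
  rajchman_vanishes_on_H_sets_general E n hmono hcl μ hμ0 hsupp
end

section
/- Let N_j ≥ 2, B_j ⊆ {0,...,N_j−1} nonempty with c = sup_j (max B_j)/N_j < 1/2, and let E be the associated Moran set. Then the Fourier dimension of E is 0: there is no nonzero finite Borel measure μ supported on E and β > 0 with |μ̂(ξ)| ≤ C|ξ|^{−β/2} for all ξ. -/
/-!
For `x ∈ E` the point `P_k x`, with `P_k = N_0 ⋯ N_k`, lies modulo `1` in the arc `[0, 2c]`,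
whose length is `< 1`. Integrate `|∑_{j<n} e(j (P_k x - c - 1/2))|²` against `μ`. On that arc
the phase stays away from `0` modulo `1`, so the geometric sum is bounded by
`2 / (1 + cos 2πc)` and the integral is `O(μ(ℝ))` uniformly in `n`. Expanding the square instead
gives `n μ(ℝ)` plus `n (n - 1)` Fourier coefficients `μ̂(m P_k)` with `m ≠ 0`, which tend to `0`
as `k → ∞` by the assumed decay. Letting `k → ∞` with `n` large forces `μ(ℝ) = 0`.
-/

open MeasureTheory Real Finset Filter Topology ComplexConjugate

lemma norm_geom_sum_le_of_re_le {z : ℂ} (hz : ‖z‖ ≤ 1) {δ : ℝ} (hδ : 0 < δ)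
    (hre : z.re ≤ 1 - δ) (n : ℕ) : ‖∑ j ∈ range n, z ^ j‖ ≤ 2 / δ := by
  have hsub : δ ≤ ‖z - 1‖ := by
    calc δ ≤ |(z - 1).re| := by
          rw [Complex.sub_re, Complex.one_re, abs_of_neg (by linarith)]
          linarith
      _ ≤ ‖z - 1‖ := Complex.abs_re_le_norm _
  have hz1 : z ≠ 1 := fun h => by simp [h] at hre; linarith
  have hnum : ‖z ^ n - 1‖ ≤ 2 :=
    calc ‖z ^ n - 1‖ ≤ ‖z‖ ^ n + ‖(1 : ℂ)‖ := by grw [norm_sub_le, norm_pow]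
      _ ≤ 2 := by grw [hz]; norm_num
  rw [geom_sum_eq hz1, norm_div]
  exact div_le_div₀ zero_le_two hnum hδ hsub

lemma cos_le_neg_cos_of_mem_Icc {c τ : ℝ} (hc : c < 1 / 2) (hτ : τ ∈ Set.Icc 0 (2 * c))
    (A : ℤ) : cos (2 * π * (A + τ - (c + 1 / 2))) ≤ -cos (2 * π * c) := by
  obtain ⟨hτ0, hτc⟩ := hτ
  have hshift : 2 * π * (A + τ - (c + 1 / 2)) = 2 * π * (τ - c) - π + A * (2 * π) := by ring
  rw [hshift, cos_add_int_mul_two_pi, cos_sub_pi, neg_le_neg_iff, ← cos_abs (2 * π * (τ - c))]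
  apply cos_le_cos_of_nonneg_of_le_pi (abs_nonneg _) (by nlinarith [pi_pos])
  rw [abs_mul, abs_of_pos two_pi_pos]
  gcongr
  exact abs_le.mpr ⟨by linarith, by linarith⟩

section Energy

variable {ι : Type*} (μ : Measure ℝ) [IsFiniteMeasure μ] (s : Finset ι) (a : ι → ℂ) (t : ι → ℝ)

lemma integral_norm_sq_sum_exp :
    ((∫ x, ‖∑ i ∈ s, a i * Complex.exp (t i * x * Complex.I)‖ ^ 2 ∂μ : ℝ) : ℂ) =
      ∑ i ∈ s, ∑ j ∈ s, a i * conj (a j) * charFun μ (t i - t j) := by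
  have hint : ∀ i j, Integrable (fun x : ℝ => Complex.exp ((t i - t j : ℝ) * x * Complex.I)) μ :=
    fun i j => (integrable_const (1 : ℝ)).mono' (by fun_prop)
      (ae_of_all _ fun x => by rw [← Complex.ofReal_mul, Complex.norm_exp_ofReal_mul_I])
  have hpoint : ∀ x : ℝ, ((‖∑ i ∈ s, a i * Complex.exp (t i * x * Complex.I)‖ ^ 2 : ℝ) : ℂ) =
      ∑ i ∈ s, ∑ j ∈ s, a i * conj (a j) * Complex.exp ((t i - t j : ℝ) * x * Complex.I) := by
    intro x
    rw [Complex.ofReal_pow, ← Complex.mul_conj', map_sum, sum_mul_sum]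
    refine sum_congr rfl fun i _ => sum_congr rfl fun j _ => ?_
    rw [map_mul, ← Complex.exp_conj]
    simp only [map_mul, Complex.conj_ofReal, Complex.conj_I]
    rw [mul_mul_mul_comm, ← Complex.exp_add]
    push_cast
    ring_nf
  rw [← integral_complex_ofReal]
  simp_rw [hpoint, charFun_apply_real]
  rw [integral_finsetSum _ fun i _ => integrable_finsetSum _ fun j _ => (hint i j).const_mul _]
  refine sum_congr rfl fun i _ => ?_
  rw [integral_finsetSum _ fun j _ => (hint i j).const_mul _]
  exact sum_congr rfl fun j _ => integral_const_mul _ _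

lemma card_mul_measureReal_sub_le_integral_norm_sq_sum_exp [DecidableEq ι]
    (ha : ∀ i ∈ s, ‖a i‖ = 1) {ε : ℝ}
    (hε : ∀ i ∈ s, ∀ j ∈ s, i ≠ j → ‖charFun μ (t i - t j)‖ ≤ ε) :
    #s * μ.real Set.univ - #s * (#s - 1) * ε ≤
      ∫ x, ‖∑ i ∈ s, a i * Complex.exp (t i * x * Complex.I)‖ ^ 2 ∂μ := by
  have hterm : ∀ i ∈ s, ∀ j ∈ s, (if i = j then μ.real Set.univ + ε else 0) - ε ≤
      (a i * conj (a j) * charFun μ (t i - t j)).re := by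
    intro i hi j hj
    by_cases hij : i = j
    · subst hij
      simp [Complex.mul_conj', ha i hi]
    · have hnorm : ‖a i * conj (a j) * charFun μ (t i - t j)‖ ≤ ε := by
        simpa [ha i hi, ha j hj] using hε i hi j hj hij
      simp only [hij, if_false, zero_sub]
      linarith [neg_abs_le (a i * conj (a j) * charFun μ (t i - t j)).re,
        Complex.abs_re_le_norm (a i * conj (a j) * charFun μ (t i - t j))]
  calc #s * μ.real Set.univ - #s * (#s - 1) * ε
      = ∑ i ∈ s, ∑ j ∈ s, ((if i = j then μ.real Set.univ + ε else 0) - ε) := by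
        simp only [sum_sub_distrib, sum_ite_eq, sum_const, nsmul_eq_mul]
        rw [sum_congr rfl fun i hi => if_pos hi, sum_const, nsmul_eq_mul]
        ring
    _ ≤ ∑ i ∈ s, ∑ j ∈ s, (a i * conj (a j) * charFun μ (t i - t j)).re :=
        sum_le_sum fun i hi => sum_le_sum fun j hj => hterm i hi j hj
    _ = ∫ x, ‖∑ i ∈ s, a i * Complex.exp (t i * x * Complex.I)‖ ^ 2 ∂μ := by
        rw [← Complex.ofReal_re (∫ x, _ ∂μ), integral_norm_sq_sum_exp, Complex.re_sum]
        simp only [Complex.re_sum]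

end Energy

lemma one_add_cos_two_pi_mul_pos {c : ℝ} (hc0 : 0 ≤ c) (hc : c < 1 / 2) :
    0 < 1 + cos (2 * π * c) := by
  have hpos : 0 < cos (π * c) :=
    cos_pos_of_mem_Ioo ⟨by nlinarith [pi_pos], by nlinarith [pi_pos]⟩
  have hsq := cos_sq (π * c)
  rw [show 2 * (π * c) = 2 * π * c by ring] at hsq
  nlinarith

lemma norm_geom_sum_exp_le {c τ : ℝ} (hc : c < 1 / 2) (hτ : τ ∈ Set.Icc 0 (2 * c)) (A : ℤ)
    (n : ℕ) :
    ‖∑ j ∈ range n, Complex.exp (↑(2 * π * (A + τ - (c + 1 / 2))) * Complex.I) ^ j‖ ≤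
      2 / (1 + cos (2 * π * c)) := by
  refine norm_geom_sum_le_of_re_le (Complex.norm_exp_ofReal_mul_I _).le
    (one_add_cos_two_pi_mul_pos (by linarith [hτ.1, hτ.2]) hc) ?_ n
  rw [Complex.exp_ofReal_mul_I_re]
  linarith [cos_le_neg_cos_of_mem_Icc hc hτ A]

lemma card_mul_measureReal_le_of_ae_mem_arc (μ : Measure ℝ) [IsFiniteMeasure μ] {c Q ε : ℝ}
    (hc : c < 1 / 2) (harc : ∀ᵐ x ∂μ, ∃ A : ℤ, Q * x - A ∈ Set.Icc 0 (2 * c))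
    (hdecay : ∀ m : ℤ, m ≠ 0 → ‖charFun μ (m * (2 * π * Q))‖ ≤ ε) (n : ℕ) :
    n * μ.real Set.univ - n * (n - 1) * ε ≤
      (2 / (1 + cos (2 * π * c))) ^ 2 * μ.real Set.univ := by
  set a : ℕ → ℂ := fun j => Complex.exp ((-(j * (2 * π * (c + 1 / 2))) : ℝ) * Complex.I)
  set t : ℕ → ℝ := fun j => j * (2 * π * Q)
  have hS : ∀ x : ℝ, ∑ j ∈ range n, a j * Complex.exp (t j * x * Complex.I) =
      ∑ j ∈ range n, Complex.exp (↑(2 * π * (Q * x - (c + 1 / 2))) * Complex.I) ^ j := by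
    refine fun x => sum_congr rfl fun j _ => ?_
    rw [← Complex.exp_add, ← Complex.exp_nat_mul]
    simp only [t]
    push_cast
    ring_nf
  have hlower := card_mul_measureReal_sub_le_integral_norm_sq_sum_exp μ (range n) a t
    (fun j _ => Complex.norm_exp_ofReal_mul_I _) (ε := ε) fun i _ j _ hij => by
      simpa [t, ← sub_mul] using hdecay (i - j) (sub_ne_zero.mpr (by exact_mod_cast hij))
  rw [card_range] at hlower
  refine hlower.trans ?_
  calc ∫ x, ‖∑ j ∈ range n, a j * Complex.exp (t j * x * Complex.I)‖ ^ 2 ∂μ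
      ≤ ∫ _, (2 / (1 + cos (2 * π * c))) ^ 2 ∂μ := by
        refine integral_mono_of_nonneg (ae_of_all _ fun x => by positivity)
          (integrable_const _) ?_
        filter_upwards [harc] with x ⟨A, hA⟩
        rw [hS x, show Q * x = A + (Q * x - A) by ring]
        exact pow_le_pow_left₀ (norm_nonneg _) (norm_geom_sum_exp_le hc hA A n) 2
    _ = (2 / (1 + cos (2 * π * c))) ^ 2 * μ.real Set.univ := by
        rw [integral_const, smul_eq_mul, mul_comm]

theorem eq_zero_of_ae_mem_arc_of_tendsto (μ : Measure ℝ) [IsFiniteMeasure μ] {c : ℝ}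
    (hc : c < 1 / 2) (Q ε : ℕ → ℝ) (hε : Tendsto ε atTop (𝓝 0))
    (harc : ∀ k, ∀ᵐ x ∂μ, ∃ A : ℤ, Q k * x - A ∈ Set.Icc 0 (2 * c))
    (hdecay : ∀ k, ∀ m : ℤ, m ≠ 0 → ‖charFun μ (m * (2 * π * Q k))‖ ≤ ε k) : μ = 0 := by
  set K := (2 / (1 + cos (2 * π * c))) ^ 2
  set n : ℕ := ⌈K⌉₊ + 1
  have hnK : K < n := by
    have := Nat.le_ceil K
    push_cast [n]
    linarith
  have hbound : ∀ k, (n - K) * μ.real Set.univ ≤ n * (n - 1) * ε k := fun k => by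
    linarith [card_mul_measureReal_le_of_ae_mem_arc μ hc (harc k) (hdecay k) n]
  have hlim : Tendsto (fun k => n * (n - 1) * ε k) atTop (𝓝 0) := by
    simpa using hε.const_mul ((n : ℝ) * (n - 1))
  have hM : μ.real Set.univ ≤ 0 :=
    nonpos_of_mul_nonpos_right (ge_of_tendsto' hlim hbound) (sub_pos.mpr hnK)
  rw [← Measure.measure_univ_eq_zero, ← measureReal_eq_zero_iff]
  exact le_antisymm hM measureReal_nonneg

def moranScale (N : ℕ → ℕ) (k : ℕ) : ℕ := ∏ i ∈ range (k + 1), N i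

section Moran

variable {N : ℕ → ℕ}

lemma moranScale_succ (k : ℕ) : moranScale N (k + 1) = moranScale N k * N (k + 1) :=
  prod_range_succ _ _

lemma moranScale_dvd {j k : ℕ} (h : j ≤ k) : moranScale N j ∣ moranScale N k :=
  prod_dvd_prod_of_subset _ _ _ (range_subset_range.mpr (by omega))

lemma moranScale_pos (hN : ∀ j, 0 < N j) (k : ℕ) : 0 < moranScale N k :=
  prod_pos fun i _ => hN i

lemma moranScale_mul_two_pow_le (hN : ∀ j, 2 ≤ N j) (k i : ℕ) :
    moranScale N k * 2 ^ i ≤ moranScale N (k + i) := by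
  induction i with
  | zero => simp
  | succ i ih =>
    rw [pow_succ, ← mul_assoc, ← add_assoc, moranScale_succ]
    exact Nat.mul_le_mul ih (hN _)

lemma tendsto_moranScale (hN : ∀ j, 2 ≤ N j) :
    Tendsto (fun k => (moranScale N k : ℝ)) atTop atTop := by
  refine tendsto_natCast_atTop_atTop.comp (tendsto_atTop_mono (fun k => ?_)
    (tendsto_pow_atTop_atTop_of_one_lt one_lt_two))
  calc 2 ^ k ≤ moranScale N 0 * 2 ^ k :=
        Nat.le_mul_of_pos_left _ (moranScale_pos (fun j => by linarith [hN j]) 0)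
    _ ≤ moranScale N k := by simpa using moranScale_mul_two_pow_le hN 0 k

lemma moranScale_mul_digit_div_le (hN : ∀ j, 2 ≤ N j) {b : ℕ → ℕ} {c : ℝ}
    (hb : ∀ j, (b j : ℝ) ≤ c * N j) (k i : ℕ) :
    (moranScale N k : ℝ) * (b (i + (k + 1)) / moranScale N (i + (k + 1))) ≤ c * (1 / 2) ^ i := by
  have hN0 : ∀ j, (0 : ℝ) < N j := fun j => by have := hN j; positivity
  have hP0 : ∀ j, (0 : ℝ) < moranScale N j := fun j => by
    exact_mod_cast moranScale_pos (fun j => by linarith [hN j]) j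
  have hc : 0 ≤ c := nonneg_of_mul_nonneg_left ((b 0).cast_nonneg.trans (hb 0)) (hN0 0)
  have hgrow : (moranScale N k : ℝ) * 2 ^ i ≤ moranScale N (k + i) := by
    exact_mod_cast moranScale_mul_two_pow_le hN k i
  rw [show i + (k + 1) = k + i + 1 by ring, moranScale_succ, Nat.cast_mul]
  calc (moranScale N k : ℝ) * (b (k + i + 1) / (moranScale N (k + i) * N (k + i + 1)))
      ≤ moranScale N k * (c * N (k + i + 1) / (moranScale N (k + i) * N (k + i + 1))) := by
        gcongr
        exact hb _
    _ = c * (moranScale N k / moranScale N (k + i)) := by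
        field_simp [(hN0 (k + i + 1)).ne']
    _ ≤ c * (1 / 2) ^ i := by
        gcongr
        rw [div_le_iff₀ (hP0 _), one_div_pow, div_mul_eq_mul_div, le_div_iff₀ (by positivity)]
        linarith

lemma exists_int_moranScale_mul_sub_mem_Icc (hN : ∀ j, 2 ≤ N j) {b : ℕ → ℕ} {c : ℝ}
    (hb : ∀ j, (b j : ℝ) ≤ c * N j) (k : ℕ) :
    ∃ A : ℤ, (moranScale N k : ℝ) * ∑' j, (b j : ℝ) / moranScale N j - A ∈ Set.Icc 0 (2 * c) := by
  set F : ℕ → ℝ := fun j => (moranScale N k : ℝ) * (b j / moranScale N j)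
  have hP0 : ∀ j, moranScale N j ≠ 0 := fun j =>
    (moranScale_pos (fun j => by linarith [hN j]) j).ne'
  have hF0 : ∀ j, 0 ≤ F j := fun j => by positivity
  have hgeom : Summable fun i : ℕ => c * (1 / 2 : ℝ) ^ i :=
    (summable_geometric_two).mul_left c
  have htail : Summable fun i => F (i + (k + 1)) :=
    hgeom.of_nonneg_of_le (fun i => hF0 _) (moranScale_mul_digit_div_le hN hb k)
  have hhead : ∑ j ∈ range (k + 1), F j =
      ((∑ j ∈ range (k + 1), b j * (moranScale N k / moranScale N j) : ℕ) : ℝ) := by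
    push_cast
    refine sum_congr rfl fun j hj => ?_
    rw [Nat.cast_div (moranScale_dvd (by simpa [Nat.lt_succ_iff] using hj))
      (by exact_mod_cast hP0 j)]
    ring
  refine ⟨(∑ j ∈ range (k + 1), b j * (moranScale N k / moranScale N j) : ℕ), ?_, ?_⟩
  all_goals
    rw [← tsum_mul_left,
      ← Summable.sum_add_tsum_nat_add (k + 1) ((summable_nat_add_iff _).mp htail),
      Int.cast_natCast, ← hhead, add_sub_cancel_left]
  · exact tsum_nonneg fun i => hF0 _
  · calc ∑' i, F (i + (k + 1)) ≤ ∑' i : ℕ, c * (1 / 2 : ℝ) ^ i :=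
          htail.tsum_le_tsum (moranScale_mul_digit_div_le hN hb k) hgeom
      _ = 2 * c := by rw [tsum_mul_left, tsum_geometric_two, mul_comm]

end Moran

lemma norm_charFun_int_mul_le {μ : Measure ℝ} {β C Q : ℝ} (hβ : 0 ≤ β) (hQ : 0 < Q)
    (hdecay : ∀ ξ : ℝ, ξ ≠ 0 →
      ‖∫ x, Complex.exp (-(2 * π * ξ * x) * Complex.I) ∂μ‖ ≤ C * |ξ| ^ (-(β / 2)))
    {m : ℤ} (hm : m ≠ 0) : ‖charFun μ (m * (2 * π * Q))‖ ≤ C * Q ^ (-(β / 2)) := by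
  have hξ : -(m * Q) ≠ 0 := neg_ne_zero.mpr (mul_ne_zero (Int.cast_ne_zero.mpr hm) hQ.ne')
  have hchar : charFun μ (m * (2 * π * Q)) =
      ∫ x, Complex.exp (-(2 * π * ↑(-(m * Q)) * x) * Complex.I) ∂μ := by
    rw [charFun_apply_real]
    congr 1 with x
    push_cast
    ring_nf
  have hC : 0 ≤ C := by
    have := (norm_nonneg _).trans (hdecay _ hξ)
    exact nonneg_of_mul_nonneg_left this (rpow_pos_of_pos (abs_pos.mpr hξ) _)
  have hQξ : Q ≤ |-(m * Q)| := by
    rw [abs_neg, abs_mul, abs_of_pos hQ]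
    exact le_mul_of_one_le_left hQ.le (by exact_mod_cast Int.one_le_abs hm)
  rw [hchar]
  exact (hdecay _ hξ).trans
    (mul_le_mul_of_nonneg_left (rpow_le_rpow_of_nonpos hQ hQξ (by linarith)) hC)

lemma le_ciSup_max'_div_mul {N : ℕ → ℕ} {B : ℕ → Finset ℕ} (hN : ∀ j, 0 < N j)
    (hBne : ∀ j, (B j).Nonempty) (hB : ∀ j, B j ⊆ range (N j)) {j b : ℕ} (hb : b ∈ B j) :
    (b : ℝ) ≤ (⨆ j, ((B j).max' (hBne j) : ℝ) / N j) * N j := by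
  have hN0 : ∀ j, (0 : ℝ) < N j := fun j => by exact_mod_cast hN j
  have hbdd : BddAbove (Set.range fun j => ((B j).max' (hBne j) : ℝ) / N j) := by
    refine ⟨1, Set.forall_mem_range.mpr fun j => (div_le_one (hN0 j)).mpr ?_⟩
    exact_mod_cast (mem_range.mp (hB j ((B j).max'_mem (hBne j)))).le
  calc (b : ℝ) ≤ (B j).max' (hBne j) := by exact_mod_cast (B j).le_max' b hb
    _ = ((B j).max' (hBne j) : ℝ) / N j * N j := (div_mul_cancel₀ _ (hN0 j).ne').symm
    _ ≤ _ := by gcongr; exact le_ciSup hbdd j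

open MeasureTheory Real Finset in
theorem moran_fourier_dimension_zero
    (N : ℕ → ℕ) (B : ℕ → Finset ℕ)
    (hN : ∀ j, 2 ≤ N j)
    (hBne : ∀ j, (B j).Nonempty)
    (hB : ∀ j, B j ⊆ Finset.range (N j))
    (hc : (⨆ j : ℕ, ((B j).max' (hBne j) : ℝ) / (N j : ℝ)) < 1 / 2) :
    let E : Set ℝ := {x | ∃ b : ℕ → ℕ, (∀ j, b j ∈ B j) ∧
      x = ∑' j : ℕ, (b j : ℝ) / ∏ i ∈ Finset.range (j + 1), (N i : ℝ)}
    ¬ ∃ (μ : Measure ℝ) (β C : ℝ), IsFiniteMeasure μ ∧ μ ≠ 0 ∧ μ Eᶜ = 0 ∧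
        0 < β ∧ ∀ ξ : ℝ, ξ ≠ 0 →
          ‖∫ x, Complex.exp (-(2 * π * ξ * x) * Complex.I) ∂μ‖ ≤
            C * |ξ| ^ (-(β / 2)) := by
  intro E
  rintro ⟨μ, β, C, hfin, hμ0, hE, hβ, hdecay⟩
  have hN0 : ∀ j, 0 < N j := fun j => by linarith [hN j]
  refine hμ0 (eq_zero_of_ae_mem_arc_of_tendsto μ hc (fun k => moranScale N k)
    (fun k => C * (moranScale N k : ℝ) ^ (-(β / 2))) ?_ (fun k => ?_)
    (fun k m hm => norm_charFun_int_mul_le hβ.le (mod_cast moranScale_pos hN0 k) hdecay hm))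
  · simpa using ((tendsto_rpow_neg_atTop (half_pos hβ)).comp (tendsto_moranScale hN)).const_mul C
  · filter_upwards [measure_eq_zero_iff_ae_notMem.mp hE] with x hx
    obtain ⟨b, hbB, rfl⟩ := not_not.mp hx
    simp_rw [← Nat.cast_prod]
    exact exists_int_moranScale_mul_sub_mem_Icc hN
      (fun j => le_ciSup_max'_div_mul hN0 hBne hB (hbB j)) k
end
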